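/- (Exact proximal point potential decrease, σ_k = 0 case) Let g be μ-strongly convex proper closed on ℝ^d with minimizer x_⋆, λ > 0, A ≥ 0, and A⁺ > A satisfying A⁺(A⁺ - λ(2+λμ)) - A(2A⁺ - A)(1+λμ)² = 0. Given x, z ∈ ℝ^d, set y = x + ((A⁺-A)(1+μA)/(A⁺ + μA(2A⁺-A)))(z - x), let x⁺ = prox_{λg}(y) with v = (y - x⁺)/λ ∈ ∂g(x⁺), and z⁺ = z + ((A⁺-A)/(1+μA⁺))(μ(x⁺ - z) - v). Then A⁺(g(x⁺) - g(x_⋆)) + ((1+μA⁺)/2)‖z⁺ - x_⋆‖² ≤ A(g(x) - g(x_⋆)) + ((1+μA)/2)‖z - x_⋆‖². -/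

import Mathlib

/-!
Strong convexity upgrades the subgradient inequality at `x⁺` to
`g u ≥ g x⁺ + ⟪v, u - x⁺⟫ + μ/2 ‖u - x⁺‖²`; use it at `u = x` with weight `A` and at `u = x⋆` with
weight `A⁺ - A`. The model `(1+μA)/2 ‖z - u‖² + (A⁺-A) (μ/2 ‖u - x⁺‖² + ⟪v, u - x⁺⟫)` has curvature
`1 + μA⁺` and centre `z⁺`, which trades `‖z - x⋆‖` for `‖z⁺ - x⋆‖`. What is left is a quadratic form
in `z - x` and `v`: the choice of `y` kills its cross term, the relation between `A`, `A⁺` and `λ`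
kills its `‖v‖²` term, and its `‖z - x‖²` coefficient is nonnegative.
-/

open RealInnerProductSpace

/-- `x` is the proximal point of `g` with step `lam` at `z`. -/
def IsProx {d : ℕ} (g : EuclideanSpace ℝ (Fin d) → ℝ) (lam : ℝ)
    (z x : EuclideanSpace ℝ (Fin d)) : Prop :=
  ∀ u, lam * g x + ‖x - z‖ ^ 2 / 2 ≤ lam * g u + ‖u - z‖ ^ 2 / 2

section

variable {E : Type*} [NormedAddCommGroup E] [InnerProductSpace ℝ E]

open Filter Set Topology in
theorem StrongConvexOn.add_inner_add_sq_le {m : ℝ} {g : E → ℝ} (hg : StrongConvexOn univ m g)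
    {x v : E} (hv : ∀ u, g x + ⟪v, u - x⟫ ≤ g u) (u : E) :
    g x + ⟪v, u - x⟫ + m / 2 * ‖u - x‖ ^ 2 ≤ g u := by
  have hseg : ∀ t ∈ Ioo (0 : ℝ) 1,
      g x + ⟪v, u - x⟫ + m / 2 * ‖u - x‖ ^ 2 ≤ g u + t * (m / 2 * ‖u - x‖ ^ 2) := by
    rintro t ⟨ht0, ht1⟩
    have hconv := hg.2 (mem_univ x) (mem_univ u) (sub_nonneg.2 ht1.le) ht0.le (by ring)
    have hsub := hv ((1 - t) • x + t • u)
    rw [show (1 - t) • x + t • u - x = t • (u - x) by module, real_inner_smul_right] at hsub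
    rw [norm_sub_rev, smul_eq_mul, smul_eq_mul] at hconv
    refine le_of_mul_le_mul_left ?_ ht0
    linarith
  have hlim : Tendsto (fun t : ℝ => g u + t * (m / 2 * ‖u - x‖ ^ 2)) (𝓝[>] 0) (𝓝 (g u)) := by
    apply tendsto_nhdsWithin_of_tendsto_nhds
    exact Continuous.tendsto' (by fun_prop) 0 _ (by simp)
  exact ge_of_tendsto hlim (eventually_of_mem (Ioo_mem_nhdsGT one_pos) hseg)

theorem weighted_sq_dist_add_inner_eq {α β : ℝ} {z w s m : E}
    (hm : (α + β) • m = α • z + β • w - s) (u : E) :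
    α / 2 * ‖z - u‖ ^ 2 + β / 2 * ‖w - u‖ ^ 2 + ⟪s, u - w⟫ =
      α / 2 * ‖z - m‖ ^ 2 + β / 2 * ‖w - m‖ ^ 2 + ⟪s, m - w⟫ + (α + β) / 2 * ‖m - u‖ ^ 2 := by
  have hzero : α • (z - m) + β • (w - m) - s = 0 := by
    linear_combination (norm := module) -hm
  have horth : α * ⟪z - m, m - u⟫ + β * ⟪w - m, m - u⟫ - ⟪s, m - u⟫ = 0 := by
    rw [← real_inner_smul_left, ← real_inner_smul_left, ← inner_add_left, ← inner_sub_left,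
      hzero, inner_zero_left]
  rw [show z - u = (z - m) + (m - u) by abel, show w - u = (w - m) + (m - u) by abel,
    show u - w = (m - w) - (m - u) by abel, norm_add_sq_real, norm_add_sq_real,
    inner_sub_right s (m - w)]
  linear_combination horth

theorem norm_smul_add_smul_sq (a b : ℝ) (x y : E) :
    ‖a • x + b • y‖ ^ 2 = a ^ 2 * ‖x‖ ^ 2 + 2 * a * b * ⟪x, y⟫ + b ^ 2 * ‖y‖ ^ 2 := by
  rw [norm_add_sq_real, norm_smul, norm_smul, real_inner_smul_left, real_inner_smul_right,
    mul_pow, mul_pow, Real.norm_eq_abs, Real.norm_eq_abs, sq_abs, sq_abs]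
  ring

theorem exact_prox_step_identity {μ lam A Ap : ℝ}
    (hquad : Ap * (Ap - lam * (2 + lam * μ)) - A * (2 * Ap - A) * (1 + lam * μ) ^ 2 = 0)
    (hD : Ap + μ * A * (2 * Ap - A) ≠ 0) (he : 1 + μ * Ap ≠ 0) {x z v xp zp : E}
    (hxp : xp = x + ((Ap - A) * (1 + μ * A) / (Ap + μ * A * (2 * Ap - A))) • (z - x) - lam • v)
    (hzp : (1 + μ * Ap) • zp = (1 + μ * A) • z + (μ * (Ap - A)) • xp - (Ap - A) • v) :
    A * ⟪v, x - xp⟫ + A * μ / 2 * ‖x - xp‖ ^ 2 + (1 + μ * A) / 2 * ‖z - xp‖ ^ 2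
        - (1 + μ * Ap) / 2 * ‖zp - xp‖ ^ 2
      = μ * A * (Ap - A) * (1 + μ * A) / (2 * (Ap + μ * A * (2 * Ap - A))) * ‖z - x‖ ^ 2 := by
  set D := Ap + μ * A * (2 * Ap - A) with hDdef
  set e := 1 + μ * Ap with hedef
  set c := (Ap - A) * (1 + μ * A) / D with hc
  have hx : x - xp = (-c) • (z - x) + lam • v := by rw [hxp]; module
  have hz : z - xp = (1 - c) • (z - x) + lam • v := by rw [hxp]; module
  have hzx : zp - xp = ((1 + μ * A) * (1 - c) / e) • (z - x)
      + (((1 + μ * A) * lam - (Ap - A)) / e) • v := by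
    apply smul_right_injective E he
    dsimp only
    rw [smul_sub, hzp, hxp]
    match_scalars <;> field_simp <;> ring
  have hc1 : 1 - c = A * e / D := by
    rw [hc]; field_simp; ring
  rw [hx, hz, hzx, norm_smul_add_smul_sq, norm_smul_add_smul_sq, norm_smul_add_smul_sq,
    inner_add_right, real_inner_smul_right, real_inner_smul_right, real_inner_self_eq_norm_sq,
    real_inner_comm v, hc1, hc]
  field_simp
  rw [hDdef, hedef]
  -- only the `‖v‖ ^ 2` coefficient needs `hquad`
  linear_combination (-(Ap + μ * A * (2 * Ap - A)) ^ 2 * ‖v‖ ^ 2) * hquad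

end

theorem exact_prox_potential_decrease {d : ℕ} (μ : ℝ) (hμ : 0 ≤ μ)
    (g : EuclideanSpace ℝ (Fin d) → ℝ)
    (hg : ConvexOn ℝ Set.univ (fun u => g u - μ / 2 * ‖u‖ ^ 2))
    (xstar : EuclideanSpace ℝ (Fin d))
    (lam A Ap : ℝ) (hlam : 0 < lam) (hA : 0 ≤ A) (hAp : A < Ap)
    (hquad : Ap * (Ap - lam * (2 + lam * μ)) - A * (2 * Ap - A) * (1 + lam * μ) ^ 2 = 0)
    (x z y xp v zp : EuclideanSpace ℝ (Fin d))
    (hy : y = x + ((Ap - A) * (1 + μ * A) / (Ap + μ * A * (2 * Ap - A))) • (z - x))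
    (hv : v = lam⁻¹ • (y - xp))
    (hsub : ∀ u, g xp + ⟪v, u - xp⟫ ≤ g u)
    (hzp : zp = z + ((Ap - A) / (1 + μ * Ap)) • (μ • (xp - z) - v)) :
    Ap * (g xp - g xstar) + (1 + μ * Ap) / 2 * ‖zp - xstar‖ ^ 2 ≤
      A * (g x - g xstar) + (1 + μ * A) / 2 * ‖z - xstar‖ ^ 2 := by
  have hAA : 0 ≤ Ap - A := sub_nonneg.2 hAp.le
  have hD : 0 < Ap + μ * A * (2 * Ap - A) := by
    have : 0 ≤ μ * A * (2 * Ap - A) := mul_nonneg (mul_nonneg hμ hA) (by linarith)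
    linarith
  have he : 0 < 1 + μ * Ap := by nlinarith
  have hxp :
      xp = x + ((Ap - A) * (1 + μ * A) / (Ap + μ * A * (2 * Ap - A))) • (z - x) - lam • v := by
    rw [hv, smul_smul, mul_inv_cancel₀ hlam.ne', one_smul, ← hy]
    abel
  have hzp' : (1 + μ * Ap) • zp = (1 + μ * A) • z + (μ * (Ap - A)) • xp - (Ap - A) • v := by
    rw [hzp, smul_add, smul_smul, mul_div_cancel₀ _ he.ne']
    module
  have hsc := (strongConvexOn_iff_convex.2 hg).add_inner_add_sq_le hsub
  have hsq := weighted_sq_dist_add_inner_eq (α := 1 + μ * A) (β := μ * (Ap - A)) (z := z) (w := xp)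
    (s := (Ap - A) • v) (m := zp) (by convert hzp' using 2; ring)
  have hsq_star := hsq xstar
  have hsq_xp := hsq xp
  simp only [sub_self, norm_zero, inner_zero_right, real_inner_smul_left] at hsq_star hsq_xp
  have hid := exact_prox_step_identity hquad hD.ne' he.ne' hxp hzp'
  have hgap :
      0 ≤ μ * A * (Ap - A) * (1 + μ * A) / (2 * (Ap + μ * A * (2 * Ap - A))) * ‖z - x‖ ^ 2 :=
    mul_nonneg (div_nonneg (mul_nonneg (mul_nonneg (mul_nonneg hμ hA) hAA) (by positivity))
      (by linarith)) (sq_nonneg _)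
  rw [norm_sub_rev xp xstar] at hsq_star
  linarith [mul_le_mul_of_nonneg_left (hsc x) hA, mul_le_mul_of_nonneg_left (hsc xstar) hAA]
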